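/- arXiv:2001.03969 — 2 statements merged into one kernel-verified Lean document; each statement's English description precedes it below -/
import Mathlib

section
/- For σ > 0 and β < 0, sup_{ω ∈ (ω̃,+∞)} M(ω) = M(ω̄) = e^(2γ - 1/σ) / (16π(-4πσβ)^(1/σ)) =: μ̄, where ω̃ = 4e^(-2γ), ω̄ = 4e^(-2γ+1/σ), and M(ω) = (1/(4πω))·(-(log(√ω/2)+γ)/(2πβ))^(1/σ). -/
noncomputable section
open Real Filter Set Topology

/-- The Euler–Mascheroni constant. -/
def euγ : ℝ := Real.eulerMascheroniConstant

/-- The threshold frequency. -/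
def ωtilde : ℝ := 4 * Real.exp (-2 * euγ)

/-- The charge of the standing wave at frequency ω. -/
def charge (σ β ω : ℝ) : ℝ :=
  (-(Real.log (Real.sqrt ω / 2) + euγ) / (2 * π * β)) ^ (1 / (2 * σ))

/-- The inverse change of variables, frequency as a function of the charge. -/
def ωof (σ β q : ℝ) : ℝ := 4 * Real.exp (-2 * euγ - 4 * π * β * q ^ (2 * σ))

/-- Energy of the standing wave as a function of the frequency. -/
def Eω (σ β ω : ℝ) : ℝ :=
  (σ * (Real.log (Real.sqrt ω / 2) + euγ) / (2 * π * (σ + 1)) - 1 / (4 * π)) *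
    (-(Real.log (Real.sqrt ω / 2) + euγ) / (2 * π * β)) ^ (1 / σ)

/-- Energy of the standing wave as a function of the charge. -/
def Echarge (σ β q : ℝ) : ℝ := -q ^ 2 / (4 * π) - σ * β * q ^ (2 * σ + 2) / (σ + 1)

/-- Mass of the standing wave as a function of the frequency. -/
def Mω (σ β ω : ℝ) : ℝ :=
  (1 / (4 * π * ω)) * (-(Real.log (Real.sqrt ω / 2) + euγ) / (2 * π * β)) ^ (1 / σ)

/-- Mass of the standing wave as a function of the charge. -/
def Mq (σ β q : ℝ) : ℝ := q ^ 2 * Real.exp (2 * euγ + 4 * π * β * q ^ (2 * σ)) / (16 * π)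

/-- The minimizing charge. -/
def qbar (σ β : ℝ) : ℝ := (-(4 * π * σ * β)) ^ (-(1 / (2 * σ)) : ℝ)

/-- The blow-up energy threshold. -/
def Λ (σ β : ℝ) : ℝ := -σ / (4 * π * (σ + 1) * (-(4 * π * σ * β)) ^ (1 / σ))

/-- The frequency of minimal energy / maximal mass. -/
def ωbar (σ : ℝ) : ℝ := 4 * Real.exp (-2 * euγ + 1 / σ)

/-- The maximal mass. -/
def μbar (σ β : ℝ) : ℝ :=
  Real.exp (2 * euγ - 1 / σ) / (16 * π * (-(4 * π * σ * β)) ^ (1 / σ))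

lemma sqrt_four_exp (x : ℝ) : Real.sqrt (4 * Real.exp x) = 2 * Real.exp (x / 2) := by
  have h : (4 : ℝ) * Real.exp x = (2 * Real.exp (x / 2)) ^ 2 := by
    rw [mul_pow, sq (Real.exp (x / 2)), ← Real.exp_add]
    norm_num
  rw [h, Real.sqrt_sq (by positivity)]

lemma key_ineq (σ t : ℝ) (hσ : 0 < σ) (ht : 0 < t) :
    Real.exp (-(2 * t)) * t ^ (1 / σ) ≤
      Real.exp (-(1 / σ)) * (1 / (2 * σ)) ^ (1 / σ) := by
  rw [Real.rpow_def_of_pos ht, Real.rpow_def_of_pos (by positivity), ← Real.exp_add,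
    ← Real.exp_add]
  apply Real.exp_le_exp.mpr
  have h := Real.log_le_sub_one_of_pos (show 0 < 2 * σ * t by positivity)
  rw [Real.log_mul (by positivity) ht.ne'] at h
  have hlog : Real.log (1 / (2 * σ)) = -Real.log (2 * σ) := by
    rw [one_div, Real.log_inv]
  rw [hlog]
  have hinv : σ * (1 / σ) = 1 := mul_one_div_cancel hσ.ne'
  nlinarith [mul_le_mul_of_nonneg_right h (le_of_lt (one_div_pos.mpr hσ))]

lemma t_pos (ω : ℝ) (hω : ω ∈ Set.Ioi ωtilde) :
    0 < Real.log (Real.sqrt ω / 2) + euγ := by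
  have h0 : (0:ℝ) < ωtilde := by unfold ωtilde; positivity
  have hs : Real.sqrt ωtilde < Real.sqrt ω := Real.sqrt_lt_sqrt h0.le hω
  rw [show ωtilde = 4 * Real.exp (-2 * euγ) from rfl, sqrt_four_exp] at hs
  have h2 : Real.exp (-2 * euγ / 2) < Real.sqrt ω / 2 := by linarith
  have := Real.log_lt_log (by positivity) h2
  rw [Real.log_exp] at this
  linarith

lemma omega_eq (ω : ℝ) (hω : ω ∈ Set.Ioi ωtilde) :
    ω = 4 * Real.exp (2 * (Real.log (Real.sqrt ω / 2) + euγ) - 2 * euγ) := by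
  have h0 : (0:ℝ) < ωtilde := by unfold ωtilde; positivity
  have hω0 : 0 < ω := h0.trans hω
  have hs : 0 < Real.sqrt ω / 2 := by positivity
  have : Real.exp (2 * (Real.log (Real.sqrt ω / 2) + euγ) - 2 * euγ) =
      (Real.sqrt ω / 2) ^ 2 := by
    rw [show 2 * (Real.log (Real.sqrt ω / 2) + euγ) - 2 * euγ =
      Real.log (Real.sqrt ω / 2) + Real.log (Real.sqrt ω / 2) by ring, Real.exp_add,
      Real.exp_log hs, sq]
  rw [this, div_pow, Real.sq_sqrt hω0.le]
  ring

lemma Mω_form (σ β ω : ℝ) (hσ : 0 < σ) (hβ : β < 0) (hω : ω ∈ Set.Ioi ωtilde) :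
    Mω σ β ω = Real.exp (2 * euγ) / (16 * π) * ((2 * π * (-β))⁻¹) ^ (1 / σ) *
      (Real.exp (-(2 * (Real.log (Real.sqrt ω / 2) + euγ))) *
        (Real.log (Real.sqrt ω / 2) + euγ) ^ (1 / σ)) := by
  have hπ := Real.pi_pos
  have hβ' : 0 < -β := neg_pos.mpr hβ
  set t := Real.log (Real.sqrt ω / 2) + euγ with htdef
  have ht : 0 < t := t_pos ω hω
  have harg : -t / (2 * π * β) = t * (2 * π * (-β))⁻¹ := by
    field_simp
  have h1 : Mω σ β ω = (1 / (4 * π * ω)) * (t ^ (1/σ) * ((2 * π * (-β))⁻¹) ^ (1/σ)) := by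
    unfold Mω
    rw [← htdef, harg, Real.mul_rpow ht.le (by positivity)]
  have hωe := omega_eq ω hω
  rw [h1, hωe]
  rw [show (1 : ℝ) / (4 * π * (4 * Real.exp (2 * t - 2 * euγ))) =
      Real.exp (-(2 * t - 2 * euγ)) / (16 * π) by
    rw [Real.exp_neg]; field_simp; ring]
  rw [show -(2 * t - 2 * euγ) = 2 * euγ + -(2 * t) by ring, Real.exp_add]
  ring

lemma tbar_eq (σ : ℝ) (hσ : 0 < σ) :
    Real.log (Real.sqrt (ωbar σ) / 2) + euγ = 1 / (2 * σ) := by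
  unfold ωbar
  rw [sqrt_four_exp,
    show (2:ℝ) * Real.exp ((-2 * euγ + 1 / σ) / 2) / 2 = Real.exp ((-2 * euγ + 1 / σ) / 2) by
      ring, Real.log_exp]
  field_simp
  ring

theorem stmt9 (σ β : ℝ) (hσ : 0 < σ) (hβ : β < 0) :
    IsGreatest (Mω σ β '' Set.Ioi ωtilde) (Mω σ β (ωbar σ)) ∧
    Mω σ β (ωbar σ) = μbar σ β := by
  have hπ := Real.pi_pos
  have hβ' : 0 < -β := neg_pos.mpr hβ
  have hmem : ωbar σ ∈ Set.Ioi ωtilde := by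
    unfold ωbar ωtilde
    simp only [Set.mem_Ioi]
    have : (-2 : ℝ) * euγ < -2 * euγ + 1 / σ := by
      have : 0 < 1 / σ := by positivity
      linarith
    nlinarith [Real.exp_lt_exp.mpr this, Real.exp_pos (-2 * euγ)]
  have hbarval : Mω σ β (ωbar σ) =
      Real.exp (2 * euγ) / (16 * π) * ((2 * π * (-β))⁻¹) ^ (1 / σ) *
        (Real.exp (-(1 / σ)) * (1 / (2 * σ)) ^ (1 / σ)) := by
    rw [Mω_form σ β (ωbar σ) hσ hβ hmem, tbar_eq σ hσ]
    congr 2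
    rw [show (2 : ℝ) * (1 / (2 * σ)) = 1 / σ by field_simp]
  constructor
  · constructor
    · exact ⟨ωbar σ, hmem, rfl⟩
    · rintro x ⟨ω, hω, rfl⟩
      rw [Mω_form σ β ω hσ hβ hω, hbarval]
      have hC : 0 ≤ Real.exp (2 * euγ) / (16 * π) * ((2 * π * (-β))⁻¹) ^ (1 / σ) := by
        apply mul_nonneg (by positivity)
        exact Real.rpow_nonneg (by positivity) _
      exact mul_le_mul_of_nonneg_left (key_ineq σ _ hσ (t_pos ω hω)) hC
  · rw [hbarval]
    unfold μbar
    have hX : (0:ℝ) < -(4 * π * σ * β) := by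
      have h := mul_pos (mul_pos (mul_pos four_pos Real.pi_pos) hσ) hβ'
      linarith [h]
    have hA : (0:ℝ) < (-(4 * π * σ * β)) ^ (1 / σ) := Real.rpow_pos_of_pos hX _
    have h1 : ((2 * π * (-β))⁻¹ : ℝ) ^ (1 / σ) * (1 / (2 * σ)) ^ (1 / σ) =
        ((-(4 * π * σ * β)) ^ (1 / σ))⁻¹ := by
      rw [← Real.mul_rpow (by positivity) (by positivity),
        show ((2 * π * (-β))⁻¹ * (1 / (2 * σ)) : ℝ) = (-(4 * π * σ * β))⁻¹ by
          rw [one_div, ← mul_inv]; congr 1; ring,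
        Real.inv_rpow hX.le]
    have h2 : Real.exp (2 * euγ) * Real.exp (-(1 / σ)) = Real.exp (2 * euγ - 1 / σ) := by
      rw [← Real.exp_add]; ring_nf
    rw [show Real.exp (2 * euγ) / (16 * π) * ((2 * π * (-β))⁻¹) ^ (1 / σ) *
        (Real.exp (-(1 / σ)) * (1 / (2 * σ)) ^ (1 / σ)) =
        (Real.exp (2 * euγ) * Real.exp (-(1 / σ))) / (16 * π) *
        (((2 * π * (-β))⁻¹) ^ (1 / σ) * (1 / (2 * σ)) ^ (1 / σ)) by ring, h1, h2]
    field_simp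
end
end

section
/- For σ > 0 and β < 0, the function D''(ω) determining Grillakis–Shatah–Strauss stability satisfies: D''(ω) = M'(ω) > 0 for ω ∈ (ω̃, ω̄) and D''(ω) = M'(ω) < 0 for ω > ω̄, where M(ω) = (1/(4πω))·(-(log(√ω/2)+γ)/(2πβ))^(1/σ), ω̃ = 4e^(-2γ), ω̄ = 4e^(-2γ+1/σ). -/
/-!
On `ω > ω̃` the base of the power in `M` is `c · log (ω / ω̃)` with `c = -1/(4πβ) > 0`, so
`M ω = (4π)⁻¹ ω⁻¹ u^(1/σ)` with `u = c · log (ω / ω̃) > 0`. Differentiating,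
`M' ω = c u^(1/σ - 1) (1/σ - log (ω / ω̃)) / (4π ω²)`, and since `ω̄ = ω̃ e^(1/σ)` the last
factor is `log ω̄ - log ω`, which changes sign exactly at `ω̄`.
-/

noncomputable section
open Real Filter Set Topology

theorem hasDerivAt_inv_mul_rpow_log {c p x₀ x : ℝ} (hu : c * log (x / x₀) ≠ 0) :
    HasDerivAt (fun y => y⁻¹ * (c * log (y / x₀)) ^ p)
      (c * (c * log (x / x₀)) ^ (p - 1) * (p - log (x / x₀)) / x ^ 2) x := by
  -- `log 0 = 0`, so `hu` already excludes `x = 0` and `x₀ = 0`.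
  have hx₀x : x / x₀ ≠ 0 := by rintro h; simp [h] at hu
  have hx : x ≠ 0 := by rintro rfl; simp at hx₀x
  have hx₀ : x₀ ≠ 0 := by rintro rfl; simp at hx₀x
  have hlog : HasDerivAt (fun y => c * log (y / x₀)) (c * x⁻¹) x := by
    refine (((hasDerivAt_id x).div_const x₀).log hx₀x).const_mul c |>.congr_deriv ?_
    simp only [id]
    field_simp
  refine ((hasDerivAt_inv hx).mul (hlog.rpow_const (Or.inl hu))).congr_deriv ?_
  rw [show (c * log (x / x₀)) ^ p = (c * log (x / x₀)) ^ (p - 1) * (c * log (x / x₀)) by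
    rw [← rpow_add_one hu, sub_add_cancel]]
  field_simp
  ring

theorem ωtilde_pos : 0 < ωtilde := by unfold ωtilde; positivity

theorem ωbar_eq_ωtilde_mul_exp (σ : ℝ) : ωbar σ = ωtilde * exp (1 / σ) := by
  rw [ωbar, ωtilde, exp_add, mul_assoc]

theorem ωtilde_lt_ωbar {σ : ℝ} (hσ : 0 < σ) : ωtilde < ωbar σ := by
  rw [ωbar_eq_ωtilde_mul_exp]
  exact lt_mul_of_one_lt_right ωtilde_pos (one_lt_exp_iff.2 (by positivity))

theorem log_sqrt_div_two_add_euγ {ω : ℝ} (hω : 0 < ω) :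
    log (√ω / 2) + euγ = log (ω / ωtilde) / 2 := by
  rw [log_div (sqrt_pos.2 hω).ne' two_ne_zero, log_sqrt hω.le, log_div hω.ne' ωtilde_pos.ne',
    ωtilde, log_mul four_ne_zero (exp_ne_zero _), log_exp,
    show (4 : ℝ) = 2 ^ 2 by norm_num, log_pow]
  push_cast
  ring

theorem Mω_eq {σ β ω : ℝ} (hω : 0 < ω) :
    Mω σ β ω = (4 * π)⁻¹ * (ω⁻¹ * ((-(4 * π * β))⁻¹ * log (ω / ωtilde)) ^ (1 / σ)) := by
  rw [Mω, log_sqrt_div_two_add_euγ hω, one_div (4 * π * ω), mul_inv, mul_assoc]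
  congr 3
  field_simp
  ring

theorem exists_pos_deriv_Mω_eq {σ β ω : ℝ} (hβ : β < 0) (hω : ωtilde < ω) :
    ∃ K > 0, deriv (Mω σ β) ω = K * (log (ωbar σ) - log ω) := by
  have hω₀ : 0 < ω := ωtilde_pos.trans hω
  set c := (-(4 * π * β))⁻¹
  have hc : 0 < c := inv_pos.2 (by nlinarith [pi_pos])
  have hu : 0 < c * log (ω / ωtilde) :=
    mul_pos hc (log_pos ((one_lt_div ωtilde_pos).2 hω))
  have hM : Mω σ β =ᶠ[𝓝 ω] fun y => (4 * π)⁻¹ * (y⁻¹ * (c * log (y / ωtilde)) ^ (1 / σ)) :=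
    (eventually_gt_nhds hω₀).mono fun y hy => Mω_eq hy
  refine ⟨(4 * π)⁻¹ * (c * (c * log (ω / ωtilde)) ^ (1 / σ - 1) / ω ^ 2), by positivity, ?_⟩
  rw [hM.deriv_eq, ((hasDerivAt_inv_mul_rpow_log hu.ne').const_mul _).deriv,
    ωbar_eq_ωtilde_mul_exp, log_mul ωtilde_pos.ne' (exp_ne_zero _), log_exp,
    log_div hω₀.ne' ωtilde_pos.ne']
  ring

theorem stmt13 (σ β : ℝ) (hσ : 0 < σ) (hβ : β < 0) :
    (∀ ω ∈ Set.Ioo ωtilde (ωbar σ), 0 < deriv (Mω σ β) ω) ∧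
    (∀ ω > ωbar σ, deriv (Mω σ β) ω < 0) := by
  constructor
  · rintro ω ⟨hlo, hhi⟩
    obtain ⟨K, hK, hderiv⟩ := exists_pos_deriv_Mω_eq (σ := σ) hβ hlo
    rw [hderiv]
    exact mul_pos hK (sub_pos.2 (log_lt_log (ωtilde_pos.trans hlo) hhi))
  · intro ω hhi
    have hlt := ωtilde_lt_ωbar hσ
    obtain ⟨K, hK, hderiv⟩ := exists_pos_deriv_Mω_eq (σ := σ) hβ (hlt.trans hhi)
    rw [hderiv]
    exact mul_neg_of_pos_of_neg hK (sub_neg.2 (log_lt_log (ωtilde_pos.trans hlt) hhi))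
end
end
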